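/- arXiv:2005.07691 — 3 statements merged into one kernel-verified Lean document; each statement's English description precedes it below -/
import Mathlib

section
/- If 0 < κ_max, |κ| ≤ κ_max, |d| ≤ d_max, d_max · κ_max < 1, and 0 ≤ v ≤ √(a_max(1 - d_max·κ_max)/κ_max) for a_max > 0, then the policy δ = arctan(κL/(1 - dκ)) satisfies the lateral acceleration constraint (v² tan(δ)/L)² ≤ a_max². -/
/-- The invariance policy steering angle satisfies the lateral acceleration constraint. -/
theorem policy_lat_acc (L d dmax κ κmax v amax : ℝ)
    (hL : 0 < L) (hamax : 0 < amax) (hκmax : 0 < κmax)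
    (hκ : |κ| ≤ κmax) (hd : |d| ≤ dmax) (hdk : dmax * κmax < 1)
    (hv0 : 0 ≤ v) (hv : v ≤ Real.sqrt (amax * (1 - dmax * κmax) / κmax)) :
    (v ^ 2 * Real.tan (Real.arctan (κ * L / (1 - d * κ))) / L) ^ 2 ≤ amax ^ 2 := by
  rw [Real.tan_arctan]
  set A := 1 - dmax * κmax with hA
  have hA0 : 0 < A := by linarith
  have hdκ : d * κ ≤ dmax * κmax := by
    calc d * κ ≤ |d * κ| := le_abs_self _
    _ = |d| * |κ| := abs_mul d κ
    _ ≤ dmax * κmax := by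
        have h0 : 0 ≤ |d| := abs_nonneg d
        have h1 : 0 ≤ κmax := hκmax.le
        exact mul_le_mul hd hκ (abs_nonneg κ) (le_trans h0 hd)
  have hden : A ≤ 1 - d * κ := by linarith
  have hden0 : 0 < 1 - d * κ := lt_of_lt_of_le hA0 hden
  have hv2 : v ^ 2 ≤ amax * A / κmax := by
    have hnn : 0 ≤ amax * A / κmax := by positivity
    have := Real.sq_sqrt hnn
    calc v ^ 2 ≤ Real.sqrt (amax * A / κmax) ^ 2 := by
          exact pow_le_pow_left₀ hv0 hv 2
      _ = amax * A / κmax := Real.sq_sqrt hnn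
  have key : |v ^ 2 * (κ * L / (1 - d * κ)) / L| ≤ amax := by
    have hL0 : L ≠ 0 := hL.ne'
    have heq : v ^ 2 * (κ * L / (1 - d * κ)) / L = v ^ 2 * κ / (1 - d * κ) := by
      field_simp
    rw [heq, abs_div, abs_mul, abs_of_pos hden0, abs_of_nonneg (sq_nonneg v),
      div_le_iff₀ hden0]
    calc v ^ 2 * |κ| ≤ (amax * A / κmax) * κmax := by
          apply mul_le_mul hv2 hκ (abs_nonneg κ) (by positivity)
      _ = amax * A := by field_simp
      _ ≤ amax * (1 - d * κ) := by nlinarith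
  have := abs_le.mp key
  nlinarith [this.1, this.2]
end

section
/- The intersection K∞ = ⋂_{n≥0} Kⁿ of the discriminating kernel algorithm iterates is itself a discrete discriminating domain of G, provided G is upper-semicontinuous with nonempty compact values, V is compact, and K is closed (so each Kⁿ is closed). -/
/-- The intersection of the discriminating kernel algorithm iterates is itself a
discrete discriminating domain of G. -/
theorem kernel_intersection_disc_domain {n p : ℕ}
    (G : (Fin n → ℝ) → (Fin p → ℝ) → Set (Fin n → ℝ))
    (K : Set (Fin n → ℝ)) (V : Set (Fin p → ℝ))
    (hK : IsClosed K) (hV : IsCompact V)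
    (husc : ∀ z ν, ∀ O : Set (Fin n → ℝ), IsOpen O → G z ν ⊆ O →
      ∀ᶠ q in nhds (z, ν), G q.1 q.2 ⊆ O)
    (hGc : ∀ z ν, IsCompact (G z ν)) (hGne : ∀ z ν, (G z ν).Nonempty)
    (Kseq : ℕ → Set (Fin n → ℝ)) (hK0 : Kseq 0 = K)
    (hKs : ∀ k, Kseq (k + 1) =
      {z ∈ Kseq k | ∀ ν ∈ V, (G z ν ∩ Kseq k).Nonempty})
    (hKcl : ∀ k, IsClosed (Kseq k)) :
    ∀ z ∈ ⋂ k, Kseq k, ∀ ν ∈ V, (G z ν ∩ ⋂ k, Kseq k).Nonempty := by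
  intro z hz ν hν
  have hmono : ∀ k, Kseq (k + 1) ⊆ Kseq k := by
    intro k x hx
    rw [hKs k] at hx
    exact hx.1
  have hzk : ∀ k, z ∈ Kseq k := fun k => Set.mem_iInter.mp hz k
  have hne : ∀ k, (G z ν ∩ Kseq k).Nonempty := by
    intro k
    have := hzk (k + 1)
    rw [hKs k] at this
    exact this.2 ν hν
  have key : (⋂ k, G z ν ∩ Kseq k).Nonempty := by
    apply IsCompact.nonempty_iInter_of_sequence_nonempty_isCompact_isClosed
    · exact fun k => Set.inter_subset_inter_right _ (hmono k)
    · exact hne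
    · exact (hGc z ν).inter_right (hKcl 0)
    · exact fun k => ((hGc z ν).isClosed).inter (hKcl k)
  rwa [← Set.inter_iInter] at key
end

section
/- K∞ = ⋂_{n≥0} Kⁿ is the largest discrete discriminating domain of G contained in K (the discrete discriminating kernel), under the assumptions that G is upper-semicontinuous with nonempty compact values and K is closed. -/
/-- K∞ = ⋂ Kⁿ is the largest discrete discriminating domain of G contained in K. -/
theorem kernel_intersection_largest {n m p : ℕ}
    (g : (Fin n → ℝ) → (Fin m → ℝ) → (Fin p → ℝ) → (Fin n → ℝ))
    (U : Set (Fin m → ℝ)) (V : Set (Fin p → ℝ))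
    (G : (Fin n → ℝ) → (Fin p → ℝ) → Set (Fin n → ℝ))
    (hG : ∀ z ν, G z ν = (fun u => g z u ν) '' U)
    (K : Set (Fin n → ℝ)) (hK : IsClosed K)
    (husc : ∀ z ν, ∀ O : Set (Fin n → ℝ), IsOpen O → G z ν ⊆ O →
      ∀ᶠ q in nhds (z, ν), G q.1 q.2 ⊆ O)
    (hGc : ∀ z ν, IsCompact (G z ν)) (hGne : ∀ z ν, (G z ν).Nonempty)
    (Kseq : ℕ → Set (Fin n → ℝ)) (hK0 : Kseq 0 = K)
    (hKs : ∀ k, Kseq (k + 1) =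
      {z ∈ Kseq k | ∀ ν ∈ V, (G z ν ∩ Kseq k).Nonempty}) :
    (⋂ k, Kseq k) ⊆ K ∧
    (∀ z ∈ ⋂ k, Kseq k, ∀ ν ∈ V, (G z ν ∩ ⋂ k, Kseq k).Nonempty) ∧
    (∀ D : Set (Fin n → ℝ), D ⊆ K →
      (∀ z ∈ D, ∀ ν ∈ V, (G z ν ∩ D).Nonempty) → D ⊆ ⋂ k, Kseq k) := by
  have hmono : ∀ k, Kseq (k + 1) ⊆ Kseq k := by
    intro k z hz
    rw [hKs k] at hz
    exact hz.1
  have hclosed : ∀ k, IsClosed (Kseq k) := by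
    intro k
    induction k with
    | zero => rw [hK0]; exact hK
    | succ k ih =>
      rw [hKs k]
      have heq : {z ∈ Kseq k | ∀ ν ∈ V, (G z ν ∩ Kseq k).Nonempty}
          = Kseq k ∩ ⋂ ν ∈ V, {z | (G z ν ∩ Kseq k).Nonempty} := by
        ext z; simp [Set.mem_iInter]
      rw [heq]
      refine ih.inter (isClosed_biInter fun ν _ => ?_)
      rw [← isOpen_compl_iff, isOpen_iff_mem_nhds]
      intro z hz
      have hsub : G z ν ⊆ (Kseq k)ᶜ := fun x hx hxK => hz ⟨x, hx, hxK⟩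
      have hev := husc z ν (Kseq k)ᶜ ih.isOpen_compl hsub
      have htend : Filter.Tendsto (fun z' => (z', ν)) (nhds z) (nhds (z, ν)) :=
        (Continuous.prodMk continuous_id continuous_const).tendsto z
      filter_upwards [htend.eventually hev] with z' hz' hmem
      obtain ⟨x, hx1, hx2⟩ := hmem
      exact hz' hx1 hx2
  refine ⟨?_, ?_, ?_⟩
  · intro z hz
    rw [← hK0]
    exact Set.mem_iInter.mp hz 0
  · intro z hz ν hν
    have hzk : ∀ k, z ∈ Kseq k := Set.mem_iInter.mp hz
    have hne : ∀ k, (G z ν ∩ Kseq k).Nonempty := by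
      intro k
      have h := hzk (k + 1)
      rw [hKs k] at h
      exact h.2 ν hν
    have key : (⋂ k, G z ν ∩ Kseq k).Nonempty := by
      apply IsCompact.nonempty_iInter_of_sequence_nonempty_isCompact_isClosed
      · exact fun k => Set.inter_subset_inter_right _ (hmono k)
      · exact hne
      · exact (hGc z ν).inter_right (hclosed 0)
      · exact fun k => ((hGc z ν).isClosed).inter (hclosed k)
    obtain ⟨x, hx⟩ := key
    simp only [Set.mem_iInter, Set.mem_inter_iff] at hx
    exact ⟨x, (hx 0).1, Set.mem_iInter.mpr fun k => (hx k).2⟩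
  · intro D hDK hDdisc z hz
    rw [Set.mem_iInter]
    intro k
    induction k generalizing z with
    | zero => rw [hK0]; exact hDK hz
    | succ k ih =>
      rw [hKs k]
      exact ⟨ih hz, fun ν hν => by
        obtain ⟨x, hx1, hx2⟩ := hDdisc z hz ν hν
        exact ⟨x, hx1, ih hx2⟩⟩
end
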